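/- Suppose f is a bounded function on ℝ² whose hyperbolic wavelet coefficients (in a Schwartz wavelet basis with rapidly decaying wavelets, L¹-normalized) satisfy the two-microlocal estimate |c_{j₁,j₂,k₁,k₂}| ≤ C·min(2^{−j₁s/α₁} + |k₁/2^{j₁} − a|^{s/α₁}, 2^{−j₂s/α₂} + |k₂/2^{j₂} − b|^{s/α₂}) at x₀ = (a,b), for an admissible anisotropy α = (α₁, α₂) and s > 0. For each j ∈ ℕ let f_j = ∑_{(j₁,j₂) ∈ Γ_j(α)} ∑_{(k₁,k₂) ∈ ℤ²} c_{j₁,j₂,k₁,k₂} ψ_{j₁,j₂,k₁,k₂}. Then there exists C' > 0 such that for all j and all x = (x₁,x₂), |f_j(x)| ≤ C'·( j·2^{−js} + j·|x₁ − a|^{s/α₁} + j·|x₂ − b|^{s/α₂} ). -/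

import Mathlib

open scoped ENNReal

/-- The anisotropic index set `Γ_j(α) = Γ_j^{HL} ∪ Γ_j^{LH} ∪ Γ_j^{HH}`. -/
def GammaSet (α₁ α₂ : ℝ) (j : ℕ) : Set (ℕ × ℕ) :=
  {q | (⌊((j : ℝ) - 1) * α₁⌋ - 1 ≤ (q.1 : ℤ) ∧ (q.1 : ℤ) ≤ ⌊(j : ℝ) * α₁⌋ + 1 ∧
          (q.2 : ℤ) ≤ ⌊((j : ℝ) - 1) * α₂⌋ - 1) ∨
       ((q.1 : ℤ) ≤ ⌊((j : ℝ) - 1) * α₁⌋ - 1 ∧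
          ⌊((j : ℝ) - 1) * α₂⌋ - 1 ≤ (q.2 : ℤ) ∧ (q.2 : ℤ) ≤ ⌊(j : ℝ) * α₂⌋ + 1) ∨
       (⌊((j : ℝ) - 1) * α₁⌋ - 1 ≤ (q.1 : ℤ) ∧ (q.1 : ℤ) ≤ ⌊(j : ℝ) * α₁⌋ + 1 ∧
          ⌊((j : ℝ) - 1) * α₂⌋ - 1 ≤ (q.2 : ℤ) ∧ (q.2 : ℤ) ≤ ⌊(j : ℝ) * α₂⌋ + 1)}

/-- The block `f_j = ∑_{(j₁,j₂) ∈ Γ_j(α)} ∑_{(k₁,k₂)} c_{j₁,j₂,k₁,k₂} ψ_{j₁,j₂,k₁,k₂}`. -/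
noncomputable def blockSum (α₁ α₂ : ℝ) (ψ : ℝ → ℝ) (c : ℕ → ℕ → ℤ → ℤ → ℝ)
    (j : ℕ) (x : ℝ × ℝ) : ℝ :=
  ∑' q : ℕ × ℕ, ∑' k : ℤ × ℤ,
    Set.indicator (GammaSet α₁ α₂ j)
      (fun _ => c q.1 q.2 k.1 k.2 *
        ψ ((2 : ℝ) ^ q.1 * x.1 - k.1) * ψ ((2 : ℝ) ^ q.2 * x.2 - k.2)) q

/-!
Every block `(j₁, j₂) ∈ Γ_j(α)` has a coordinate `i` at high frequency, `j_i ≥ (j - 1)α_i - 2`,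
where `2^{-j_i s/α_i} ≲ 2^{-js}`. Bounding `|c|` by the weight of that coordinate only, the
double sum over `k ∈ ℤ²` factors into two lattice sums of the rapidly decaying `ψ`; the weighted
one is controlled through `|k 2^{-j} - a| ≤ |x - a| + 2^{-j} |2^j x - k|`, and both are bounded
uniformly in `x` because `∑_k (1 + |u - k|)^{-2}` is bounded uniformly in `u`. Each block is thus
`O(2^{-js} + |x₁ - a|^{s/α₁} + |x₂ - b|^{s/α₂})`, and `Γ_j(α)` has `O(j)` elements.
-/

open Finset

lemma one_add_abs_sub_floor_le (u : ℝ) (k : ℤ) :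
    1 + |((k - ⌊u⌋ : ℤ) : ℝ)| ≤ 2 * (1 + |u - k|) := by
  have h₀ := Int.floor_le u
  have h₁ := Int.lt_floor_add_one u
  push_cast
  cases abs_cases (u - k) <;> cases abs_cases ((k : ℝ) - ⌊u⌋) <;> linarith

lemma summable_inv_one_add_abs_sq : Summable fun n : ℤ => ((1 + |(n : ℝ)|) ^ 2)⁻¹ := by
  have h := (summable_nat_add_iff 1).2 (Real.summable_nat_pow_inv.2 one_lt_two)
  refine .of_nat_of_neg ?_ ?_ <;> simpa [add_comm] using h

lemma summable_and_tsum_le_of_le_inv_one_add_abs_sq {g : ℝ → ℝ} {K : ℝ}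
    (hg₀ : ∀ v, 0 ≤ g v) (hg : ∀ v, g v ≤ K * ((1 + |v|) ^ 2)⁻¹) (u : ℝ) :
    Summable (fun k : ℤ => g (u - k)) ∧
      ∑' k : ℤ, g (u - k) ≤ 4 * K * ∑' n : ℤ, ((1 + |(n : ℝ)|) ^ 2)⁻¹ := by
  set h : ℤ → ℝ := fun n => ((1 + |(n : ℝ)|) ^ 2)⁻¹
  have hK : 0 ≤ K := by simpa using (hg₀ 0).trans (hg 0)
  have hle : ∀ k : ℤ, g (u - k) ≤ 4 * K * h (k - ⌊u⌋) := fun k => by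
    have := one_add_abs_sub_floor_le u k
    calc g (u - k) ≤ K * ((1 + |u - k|) ^ 2)⁻¹ := hg _
      _ ≤ K * (4 * h (k - ⌊u⌋)) := by
        gcongr
        rw [← inv_inv (4 : ℝ), ← mul_inv, inv_le_inv₀ (by positivity) (by positivity)]
        nlinarith [abs_nonneg ((k - ⌊u⌋ : ℤ) : ℝ)]
      _ = 4 * K * h (k - ⌊u⌋) := by ring
  have hshift : Summable fun k : ℤ => h (k - ⌊u⌋) :=
    (Equiv.subRight ⌊u⌋).summable_iff.2 summable_inv_one_add_abs_sq
  have hsum := Summable.of_nonneg_of_le (fun k => hg₀ _) hle (hshift.mul_left (4 * K))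
  refine ⟨hsum, (hsum.tsum_le_tsum hle (hshift.mul_left _)).trans_eq ?_⟩
  rw [tsum_mul_left]
  exact congrArg _ ((Equiv.subRight ⌊u⌋).tsum_eq h)

lemma abs_mul_abs_rpow_le_of_decay {ψ : ℝ → ℝ} {θ : ℝ} (hθ : 0 ≤ θ)
    (hψ : ∀ N : ℕ, ∃ CN > (0 : ℝ), ∀ u : ℝ, |ψ u| ≤ CN * (1 + |u|) ^ (-(N : ℝ))) :
    ∃ K > 0, ∀ v : ℝ, |ψ v| * |v| ^ θ ≤ K * ((1 + |v|) ^ 2)⁻¹ := by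
  obtain ⟨K, hK, hdecay⟩ := hψ (⌈θ⌉₊ + 2)
  refine ⟨K, hK, fun v => ?_⟩
  have h₁ : 1 ≤ 1 + |v| := le_add_of_nonneg_right (abs_nonneg v)
  calc |ψ v| * |v| ^ θ ≤ K * (1 + |v|) ^ (-((⌈θ⌉₊ + 2 : ℕ) : ℝ)) * (1 + |v|) ^ θ := by
        gcongr
        · exact hdecay v
        · exact le_add_of_nonneg_left zero_le_one
    _ = K * (1 + |v|) ^ (θ - ((⌈θ⌉₊ + 2 : ℕ) : ℝ)) := by
        rw [mul_assoc, ← Real.rpow_add (by positivity)]; ring_nf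
    _ ≤ K * (1 + |v|) ^ (-2 : ℝ) := by
        gcongr
        push_cast; linarith [Nat.le_ceil θ]
    _ = K * ((1 + |v|) ^ 2)⁻¹ := by rw [Real.rpow_neg (by positivity)]; norm_cast

lemma exists_tsum_abs_mul_abs_rpow_le {ψ : ℝ → ℝ} {θ : ℝ} (hθ : 0 ≤ θ)
    (hψ : ∀ N : ℕ, ∃ CN > (0 : ℝ), ∀ u : ℝ, |ψ u| ≤ CN * (1 + |u|) ^ (-(N : ℝ))) :
    ∃ S > 0, ∀ u : ℝ, Summable (fun k : ℤ => |ψ (u - k)| * |u - k| ^ θ) ∧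
      ∑' k : ℤ, |ψ (u - k)| * |u - k| ^ θ ≤ S := by
  obtain ⟨K, hK, hle⟩ := abs_mul_abs_rpow_le_of_decay hθ hψ
  have hpos : 0 < ∑' n : ℤ, ((1 + |(n : ℝ)|) ^ 2)⁻¹ :=
    summable_inv_one_add_abs_sq.tsum_pos (fun n => by positivity) 0 (by norm_num)
  exact ⟨_, by positivity, summable_and_tsum_le_of_le_inv_one_add_abs_sq
    (g := fun v => |ψ v| * |v| ^ θ) (fun v => by positivity) hle⟩

lemma exists_tsum_abs_le {ψ : ℝ → ℝ}
    (hψ : ∀ N : ℕ, ∃ CN > (0 : ℝ), ∀ u : ℝ, |ψ u| ≤ CN * (1 + |u|) ^ (-(N : ℝ))) :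
    ∃ S > 0, ∀ u : ℝ, Summable (fun k : ℤ => |ψ (u - k)|) ∧ ∑' k : ℤ, |ψ (u - k)| ≤ S := by
  simpa using exists_tsum_abs_mul_abs_rpow_le le_rfl hψ

lemma Real.add_rpow_le_two_rpow_mul_rpow_add_rpow {a b p : ℝ} (ha : 0 ≤ a) (hb : 0 ≤ b)
    (hp : 0 ≤ p) : (a + b) ^ p ≤ 2 ^ p * (a ^ p + b ^ p) := calc
  (a + b) ^ p ≤ (2 * max a b) ^ p := by
    gcongr; linarith [le_max_left a b, le_max_right a b]
  _ = 2 ^ p * max a b ^ p := Real.mul_rpow zero_le_two (le_max_of_le_left ha)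
  _ ≤ 2 ^ p * (a ^ p + b ^ p) := by
    gcongr
    rcases max_cases a b with ⟨h, -⟩ | ⟨h, -⟩ <;> rw [h] <;>
      linarith [Real.rpow_nonneg ha p, Real.rpow_nonneg hb p]

noncomputable def microlocalWeight (θ a : ℝ) (j : ℕ) (k : ℤ) : ℝ :=
  (2 : ℝ) ^ (-(j : ℝ) * θ) + |(k : ℝ) / 2 ^ j - a| ^ θ

lemma abs_div_two_pow_sub_rpow_le {θ : ℝ} (hθ : 0 ≤ θ) (j : ℕ) (k : ℤ) (x a : ℝ) :
    |(k : ℝ) / 2 ^ j - a| ^ θ ≤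
      2 ^ θ * (|x - a| ^ θ + 2 ^ (-(j : ℝ) * θ) * |2 ^ j * x - k| ^ θ) := by
  have h2j : (0 : ℝ) < 2 ^ j := by positivity
  have hsplit : |(k : ℝ) / 2 ^ j - a| ≤ |x - a| + |2 ^ j * x - k| / 2 ^ j := by
    have : (k : ℝ) / 2 ^ j - a = (x - a) - (2 ^ j * x - k) / 2 ^ j := by field_simp; ring
    rw [this]
    exact (abs_sub _ _).trans_eq (by rw [abs_div, abs_of_pos h2j])
  have hscale : (|2 ^ j * x - k| / 2 ^ j) ^ θ = 2 ^ (-(j : ℝ) * θ) * |2 ^ j * x - k| ^ θ := by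
    rw [Real.div_rpow (abs_nonneg _) h2j.le, div_eq_inv_mul, ← Real.rpow_natCast,
      ← Real.rpow_mul zero_le_two, ← Real.rpow_neg zero_le_two, neg_mul]
  calc |(k : ℝ) / 2 ^ j - a| ^ θ ≤ (|x - a| + |2 ^ j * x - k| / 2 ^ j) ^ θ := by gcongr
    _ ≤ 2 ^ θ * (|x - a| ^ θ + (|2 ^ j * x - k| / 2 ^ j) ^ θ) :=
      Real.add_rpow_le_two_rpow_mul_rpow_add_rpow (abs_nonneg _) (by positivity) hθ
    _ = _ := by rw [hscale]

lemma exists_tsum_microlocalWeight_mul_le {ψ : ℝ → ℝ} {θ : ℝ} (hθ : 0 ≤ θ)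
    (hψ : ∀ N : ℕ, ∃ CN > (0 : ℝ), ∀ u : ℝ, |ψ u| ≤ CN * (1 + |u|) ^ (-(N : ℝ))) (a : ℝ) :
    ∃ B > 0, ∀ (j : ℕ) (x : ℝ),
      Summable (fun k : ℤ => microlocalWeight θ a j k * |ψ (2 ^ j * x - k)|) ∧
      ∑' k : ℤ, microlocalWeight θ a j k * |ψ (2 ^ j * x - k)| ≤
        B * (2 ^ (-(j : ℝ) * θ) + |x - a| ^ θ) := by
  obtain ⟨S₀, hS₀, h₀⟩ := exists_tsum_abs_le hψ
  obtain ⟨S, hS, hθsum⟩ := exists_tsum_abs_mul_abs_rpow_le hθ hψ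
  refine ⟨S₀ + 2 ^ θ * S₀ + 2 ^ θ * S, by positivity, fun j x => ?_⟩
  set u := (2 : ℝ) ^ j * x
  set P := (2 : ℝ) ^ (-(j : ℝ) * θ)
  set X := |x - a| ^ θ
  have hP : 0 < P := by positivity
  have hX : 0 ≤ X := by positivity
  have h2θ : 0 < (2 : ℝ) ^ θ := by positivity
  obtain ⟨hs₀, hle₀⟩ := h₀ u
  obtain ⟨hs, hle⟩ := hθsum u
  have hterm : ∀ k : ℤ, microlocalWeight θ a j k * |ψ (u - k)| ≤
      (P + 2 ^ θ * X) * |ψ (u - k)| + 2 ^ θ * P * (|ψ (u - k)| * |u - k| ^ θ) := fun k => by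
    have := abs_div_two_pow_sub_rpow_le hθ j k x a
    unfold microlocalWeight
    nlinarith [abs_nonneg (ψ (u - k))]
  have hmaj := (hs₀.mul_left (P + 2 ^ θ * X)).add (hs.mul_left (2 ^ θ * P))
  have hsum := Summable.of_nonneg_of_le
    (fun k => by unfold microlocalWeight; positivity) hterm hmaj
  refine ⟨hsum, ?_⟩
  calc _ ≤ _ := hsum.tsum_le_tsum hterm hmaj
    _ = (P + 2 ^ θ * X) * ∑' k : ℤ, |ψ (u - k)| +
          2 ^ θ * P * ∑' k : ℤ, |ψ (u - k)| * |u - k| ^ θ := by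
      rw [(hs₀.mul_left _).tsum_add (hs.mul_left _), tsum_mul_left, tsum_mul_left]
    _ ≤ (P + 2 ^ θ * X) * S₀ + 2 ^ θ * P * S := by gcongr
    _ ≤ (S₀ + 2 ^ θ * S₀ + 2 ^ θ * S) * (P + X) := by
      nlinarith [mul_nonneg hS₀.le hX, mul_pos (mul_pos h2θ hS₀) hP,
        mul_nonneg (mul_nonneg h2θ.le hS.le) hX]

lemma two_rpow_neg_mul_div_le {α s : ℝ} (hα : 0 < α) (hs : 0 ≤ s) {j j₁ : ℕ}
    (h : ⌊((j : ℝ) - 1) * α⌋ - 1 ≤ (j₁ : ℤ)) :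
    (2 : ℝ) ^ (-(j₁ : ℝ) * (s / α)) ≤ 2 ^ (s + 2 * (s / α)) * 2 ^ (-(j : ℝ) * s) := by
  rw [← Real.rpow_add zero_lt_two]
  apply Real.rpow_le_rpow_of_exponent_le one_le_two
  have hj₁ : ((j : ℝ) - 1) * α - 2 ≤ j₁ := by
    have h₁ := Int.sub_one_lt_floor (((j : ℝ) - 1) * α)
    have h₂ : ((⌊((j : ℝ) - 1) * α⌋ - 1 : ℤ) : ℝ) ≤ (j₁ : ℝ) := by exact_mod_cast h
    push_cast at h₂
    linarith
  have hαθ : α * (s / α) = s := mul_div_cancel₀ s hα.ne'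
  have := mul_le_mul_of_nonneg_right hj₁ (div_nonneg hs hα.le)
  nlinarith

lemma exists_tsum_microlocalWeight_mul_le_of_floor_le {ψ : ℝ → ℝ}
    (hψ : ∀ N : ℕ, ∃ CN > (0 : ℝ), ∀ u : ℝ, |ψ u| ≤ CN * (1 + |u|) ^ (-(N : ℝ)))
    {α s : ℝ} (hα : 0 < α) (hs : 0 ≤ s) (a : ℝ) :
    ∃ B > 0, ∀ j j₁ : ℕ, ⌊((j : ℝ) - 1) * α⌋ - 1 ≤ (j₁ : ℤ) → ∀ x : ℝ,
      Summable (fun k : ℤ => microlocalWeight (s / α) a j₁ k * |ψ (2 ^ j₁ * x - k)|) ∧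
      ∑' k : ℤ, microlocalWeight (s / α) a j₁ k * |ψ (2 ^ j₁ * x - k)| ≤
        B * (2 ^ (-(j : ℝ) * s) + |x - a| ^ (s / α)) := by
  obtain ⟨B, hB, hb⟩ := exists_tsum_microlocalWeight_mul_le (div_nonneg hs hα.le) hψ a
  set E := (2 : ℝ) ^ (s + 2 * (s / α))
  have hE : 1 ≤ E := Real.one_le_rpow one_le_two (by positivity)
  refine ⟨B * (E + 1), by positivity, fun j j₁ h x => ⟨(hb j₁ x).1, (hb j₁ x).2.trans ?_⟩⟩
  have hQ : 0 < (2 : ℝ) ^ (-(j : ℝ) * s) := by positivity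
  have hX : 0 ≤ |x - a| ^ (s / α) := by positivity
  calc B * (2 ^ (-(j₁ : ℝ) * (s / α)) + |x - a| ^ (s / α))
      ≤ B * (E * 2 ^ (-(j : ℝ) * s) + |x - a| ^ (s / α)) := by
        gcongr; exact two_rpow_neg_mul_div_le hα hs h
    _ ≤ B * ((E + 1) * (2 ^ (-(j : ℝ) * s) + |x - a| ^ (s / α))) := by gcongr; nlinarith
    _ = B * (E + 1) * (2 ^ (-(j : ℝ) * s) + |x - a| ^ (s / α)) := by ring

lemma summable_abs_and_tsum_abs_le_of_abs_le_mul {ι ι' : Type*} {f : ι × ι' → ℝ}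
    {F : ι → ℝ} {G : ι' → ℝ} (hF : Summable F) (hG : Summable G) (hF₀ : ∀ i, 0 ≤ F i)
    (hG₀ : ∀ i, 0 ≤ G i) (hf : ∀ k, |f k| ≤ F k.1 * G k.2) :
    Summable (fun k => |f k|) ∧ ∑' k, |f k| ≤ (∑' i, F i) * ∑' i, G i := by
  have hFG := hF.mul_of_nonneg hG hF₀ hG₀
  have hsum := Summable.of_nonneg_of_le (fun k => abs_nonneg _) hf hFG
  exact ⟨hsum, (hsum.tsum_le_tsum hf hFG).trans_eq (hF.tsum_mul_tsum hG hFG).symm⟩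

noncomputable def waveletTerm (ψ : ℝ → ℝ) (c : ℕ → ℕ → ℤ → ℤ → ℝ) (q : ℕ × ℕ) (x : ℝ × ℝ)
    (k : ℤ × ℤ) : ℝ :=
  c q.1 q.2 k.1 k.2 * ψ (2 ^ q.1 * x.1 - k.1) * ψ (2 ^ q.2 * x.2 - k.2)

lemma exists_abs_tsum_waveletTerm_le {α₁ α₂ s : ℝ} (hα₁ : 0 < α₁) (hα₂ : 0 < α₂)
    (hs : 0 ≤ s) {ψ : ℝ → ℝ}
    (hψ : ∀ N : ℕ, ∃ CN > (0 : ℝ), ∀ u : ℝ, |ψ u| ≤ CN * (1 + |u|) ^ (-(N : ℝ)))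
    {c : ℕ → ℕ → ℤ → ℤ → ℝ} {C : ℝ} (hC : 0 < C) (a b : ℝ)
    (hcoef : ∀ (j₁ j₂ : ℕ) (k₁ k₂ : ℤ), |c j₁ j₂ k₁ k₂| ≤
      C * min (microlocalWeight (s / α₁) a j₁ k₁) (microlocalWeight (s / α₂) b j₂ k₂)) :
    ∃ B > 0, ∀ (j : ℕ) (q : ℕ × ℕ),
      (⌊((j : ℝ) - 1) * α₁⌋ - 1 ≤ (q.1 : ℤ) ∨ ⌊((j : ℝ) - 1) * α₂⌋ - 1 ≤ (q.2 : ℤ)) →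
      ∀ x : ℝ × ℝ, |∑' k, waveletTerm ψ c q x k| ≤
        B * (2 ^ (-(j : ℝ) * s) + |x.1 - a| ^ (s / α₁) + |x.2 - b| ^ (s / α₂)) := by
  obtain ⟨S₀, hS₀, h₀⟩ := exists_tsum_abs_le hψ
  obtain ⟨B₁, hB₁, h₁⟩ := exists_tsum_microlocalWeight_mul_le_of_floor_le hψ hα₁ hs a
  obtain ⟨B₂, hB₂, h₂⟩ := exists_tsum_microlocalWeight_mul_le_of_floor_le hψ hα₂ hs b
  refine ⟨C * S₀ * (B₁ + B₂), by positivity, fun j ⟨j₁, j₂⟩ hj x => ?_⟩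
  set Q := (2 : ℝ) ^ (-(j : ℝ) * s)
  set X₁ := |x.1 - a| ^ (s / α₁)
  set X₂ := |x.2 - b| ^ (s / α₂)
  have hQ : 0 ≤ Q := by positivity
  have hX₁ : 0 ≤ X₁ := by positivity
  have hX₂ : 0 ≤ X₂ := by positivity
  have hw (θ a y : ℝ) (j : ℕ) (k : ℤ) : 0 ≤ microlocalWeight θ a j k * |ψ (2 ^ j * y - k)| := by
    unfold microlocalWeight; positivity
  suffices h : Summable (fun k => |waveletTerm ψ c (j₁, j₂) x k|) ∧
      ∑' k, |waveletTerm ψ c (j₁, j₂) x k| ≤ C * S₀ * (B₁ + B₂) * (Q + X₁ + X₂) from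
    (norm_tsum_le_tsum_norm (f := waveletTerm ψ c (j₁, j₂) x) h.1).trans h.2
  rcases hj with hj | hj
  · obtain ⟨hs₁, hle₁⟩ := h₁ j j₁ hj x.1
    obtain ⟨hs₀, hle₀⟩ := h₀ (2 ^ j₂ * x.2)
    obtain ⟨hsum, hle⟩ := summable_abs_and_tsum_abs_le_of_abs_le_mul
      (f := waveletTerm ψ c (j₁, j₂) x) (hs₁.mul_left C) hs₀
      (fun k => mul_nonneg hC.le (hw ..)) (fun k => abs_nonneg _) fun k => by
        rw [waveletTerm, abs_mul, abs_mul, ← mul_assoc C]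
        gcongr
        exact (hcoef ..).trans (by gcongr; exact min_le_left ..)
    refine ⟨hsum, hle.trans ?_⟩
    rw [tsum_mul_left]
    calc _ ≤ C * (B₁ * (Q + X₁)) * S₀ := by gcongr
      _ = C * S₀ * B₁ * (Q + X₁) := by ring
      _ ≤ C * S₀ * (B₁ + B₂) * (Q + X₁ + X₂) := by gcongr C * S₀ * ?_ * ?_ <;> linarith
  · obtain ⟨hs₂, hle₂⟩ := h₂ j j₂ hj x.2
    obtain ⟨hs₀, hle₀⟩ := h₀ (2 ^ j₁ * x.1)
    obtain ⟨hsum, hle⟩ := summable_abs_and_tsum_abs_le_of_abs_le_mul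
      (f := waveletTerm ψ c (j₁, j₂) x) hs₀ (hs₂.mul_left C)
      (fun k => abs_nonneg _) (fun k => mul_nonneg hC.le (hw ..)) fun k => by
        rw [waveletTerm, abs_mul, abs_mul, mul_comm |c _ _ _ _|, mul_assoc, ← mul_assoc C]
        gcongr
        exact (hcoef ..).trans (by gcongr; exact min_le_right ..)
    refine ⟨hsum, hle.trans ?_⟩
    rw [tsum_mul_left]
    calc _ ≤ S₀ * (C * (B₂ * (Q + X₂))) := by
          gcongr
          exact mul_nonneg hC.le (tsum_nonneg fun k => hw ..)
      _ = C * S₀ * B₂ * (Q + X₂) := by ring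
      _ ≤ C * S₀ * (B₁ + B₂) * (Q + X₁ + X₂) := by gcongr C * S₀ * ?_ * ?_ <;> linarith

noncomputable def scaleWindow (α : ℝ) (j : ℕ) : Finset ℕ :=
  Icc (⌊((j : ℝ) - 1) * α⌋ - 1).toNat (⌊(j : ℝ) * α⌋ + 1).toNat

noncomputable def gammaCover (α₁ α₂ : ℝ) (j : ℕ) : Finset (ℕ × ℕ) :=
  scaleWindow α₁ j ×ˢ range (2 * j + 2) ∪ range (2 * j + 2) ×ˢ scaleWindow α₂ j

lemma floor_mul_lt_floor_sub_one_mul_add_four {α : ℝ} (hα : α ≤ 2) (j : ℕ) :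
    ⌊(j : ℝ) * α⌋ < ⌊((j : ℝ) - 1) * α⌋ + 4 := by
  rw [Int.floor_lt]
  push_cast
  linarith [Int.sub_one_lt_floor (((j : ℝ) - 1) * α)]

lemma card_scaleWindow_le {α : ℝ} (hα : α ≤ 2) (j : ℕ) : #(scaleWindow α j) ≤ 6 := by
  have := floor_mul_lt_floor_sub_one_mul_add_four hα j
  rw [scaleWindow, Nat.card_Icc]
  omega

lemma card_gammaCover_le {α₁ α₂ : ℝ} (hα₁ : α₁ ≤ 2) (hα₂ : α₂ ≤ 2) (j : ℕ) :
    #(gammaCover α₁ α₂ j) ≤ 24 * j + 24 := by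
  have h₁ := card_scaleWindow_le hα₁ j
  have h₂ := card_scaleWindow_le hα₂ j
  calc #(gammaCover α₁ α₂ j)
      _ ≤ #(scaleWindow α₁ j) * (2 * j + 2) + (2 * j + 2) * #(scaleWindow α₂ j) := by
        rw [← card_range (2 * j + 2), ← card_product, ← card_product]
        exact card_union_le _ _
      _ ≤ 24 * j + 24 := by nlinarith

lemma floor_mul_le_two_mul {α y : ℝ} (hα₀ : 0 ≤ α) (hα : α ≤ 2) {j : ℕ} (hy : y ≤ j) :
    ⌊y * α⌋ ≤ 2 * j := by
  rw [Int.floor_le_iff]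
  push_cast
  nlinarith

lemma gammaSet_subset_gammaCover {α₁ α₂ : ℝ} (hα₁ : 0 ≤ α₁) (hα₁' : α₁ ≤ 2) (hα₂ : 0 ≤ α₂)
    (hα₂' : α₂ ≤ 2) (j : ℕ) : GammaSet α₁ α₂ j ⊆ gammaCover α₁ α₂ j := by
  have h₁ := floor_mul_le_two_mul hα₁ hα₁' (le_refl (j : ℝ))
  have h₁' := floor_mul_le_two_mul hα₁ hα₁' (sub_le_self (j : ℝ) zero_le_one)
  have h₂ := floor_mul_le_two_mul hα₂ hα₂' (le_refl (j : ℝ))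
  have h₂' := floor_mul_le_two_mul hα₂ hα₂' (sub_le_self (j : ℝ) zero_le_one)
  rintro q (⟨_, _, _⟩ | ⟨_, _, _⟩ | ⟨_, _, _, _⟩) <;>
    simp only [gammaCover, scaleWindow, coe_union, coe_product, coe_Icc, coe_range,
      Set.mem_union, Set.mem_prod, Set.mem_Icc, Set.mem_Iio] <;> omega

lemma floor_le_or_floor_le_of_mem_gammaSet {α₁ α₂ : ℝ} {j : ℕ} {q : ℕ × ℕ}
    (hq : q ∈ GammaSet α₁ α₂ j) :
    ⌊((j : ℝ) - 1) * α₁⌋ - 1 ≤ (q.1 : ℤ) ∨ ⌊((j : ℝ) - 1) * α₂⌋ - 1 ≤ (q.2 : ℤ) := by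
  rcases hq with ⟨h, -⟩ | ⟨-, h, -⟩ | ⟨h, -⟩
  exacts [Or.inl h, Or.inr h, Or.inl h]

lemma abs_tsum_indicator_le {ι : Type*} {s : Set ι} {t : Finset ι} (hst : s ⊆ t)
    {g : ι → ℝ} {D : ℝ} (hD : 0 ≤ D) (hg : ∀ q ∈ s, |g q| ≤ D) :
    |∑' q, s.indicator g q| ≤ #t * D := by
  rw [tsum_eq_sum fun q hq => Set.indicator_of_notMem (fun h => hq (hst h)) g]
  refine (abs_sum_le_sum_abs _ _).trans ?_
  rw [← nsmul_eq_mul]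
  refine sum_le_card_nsmul _ _ _ fun q _ => ?_
  by_cases hq : q ∈ s
  · simpa [hq] using hg q hq
  · simpa [hq] using hD

lemma blockSum_eq_tsum_indicator (α₁ α₂ : ℝ) (ψ : ℝ → ℝ) (c : ℕ → ℕ → ℤ → ℤ → ℝ) (j : ℕ)
    (x : ℝ × ℝ) : blockSum α₁ α₂ ψ c j x =
      ∑' q, (GammaSet α₁ α₂ j).indicator (fun q => ∑' k, waveletTerm ψ c q x k) q := by
  unfold blockSum waveletTerm
  congr 1
  funext q
  by_cases hq : q ∈ GammaSet α₁ α₂ j <;> simp [hq]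

/-- Bound on the blocks `f_j` under the two-microlocal coefficient estimate at
`x₀ = (a,b)` and rapid decay of the wavelet `ψ`. -/
theorem block_bound_of_two_microlocal
    (α₁ α₂ s a b : ℝ) (hα₁ : 0 < α₁) (hα₂ : 0 < α₂) (hsum : α₁ + α₂ = 2) (hs : 0 < s)
    (ψ : ℝ → ℝ)
    (hψ : ∀ N : ℕ, ∃ CN > (0 : ℝ), ∀ u : ℝ, |ψ u| ≤ CN * (1 + |u|) ^ (-(N : ℝ)))
    (c : ℕ → ℕ → ℤ → ℤ → ℝ) (C : ℝ) (hC : 0 < C)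
    (hcoef : ∀ (j₁ j₂ : ℕ) (k₁ k₂ : ℤ),
      |c j₁ j₂ k₁ k₂| ≤
        C * min ((2 : ℝ) ^ (-(j₁ : ℝ) * (s / α₁)) + |(k₁ : ℝ) / 2 ^ j₁ - a| ^ (s / α₁))
                ((2 : ℝ) ^ (-(j₂ : ℝ) * (s / α₂)) + |(k₂ : ℝ) / 2 ^ j₂ - b| ^ (s / α₂))) :
    ∃ C' > (0 : ℝ), ∀ j : ℕ, 1 ≤ j → ∀ x : ℝ × ℝ,
      |blockSum α₁ α₂ ψ c j x| ≤
        C' * ((j : ℝ) * (2 : ℝ) ^ (-(j : ℝ) * s) +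
              (j : ℝ) * |x.1 - a| ^ (s / α₁) + (j : ℝ) * |x.2 - b| ^ (s / α₂)) := by
  obtain ⟨B, hB, hblock⟩ := exists_abs_tsum_waveletTerm_le hα₁ hα₂ hs.le hψ hC a b hcoef
  refine ⟨48 * B, by positivity, fun j hj x => ?_⟩
  set D := B * ((2 : ℝ) ^ (-(j : ℝ) * s) + |x.1 - a| ^ (s / α₁) + |x.2 - b| ^ (s / α₂))
  have hcard : (#(gammaCover α₁ α₂ j) : ℝ) ≤ 48 * j := by
    exact_mod_cast (card_gammaCover_le (by linarith) (by linarith) j).trans (by omega)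
  rw [blockSum_eq_tsum_indicator]
  calc _ ≤ #(gammaCover α₁ α₂ j) * D :=
        abs_tsum_indicator_le
          (gammaSet_subset_gammaCover hα₁.le (by linarith) hα₂.le (by linarith) j)
          (by positivity) fun q hq => hblock j q (floor_le_or_floor_le_of_mem_gammaSet hq) x
    _ ≤ 48 * j * D := by gcongr
    _ = _ := by ring
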